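/- Let f : M → ℝ be a Morse–Bott function on a compact manifold with critical submanifolds C₀,…,C_k ordered so f(C_i) < f(C_j) for i < j, and suppose each long exact sequence of the pair (M_i^+, M_i^-) in cohomology splits into short exact sequences 0 → H^{*−λ_i}(C_i) → H^*(M_i^+) → H^*(M_i^-) → 0 (equivariant formal/perfect Morse situation). If a class α ∈ H^*(M) restricts to 0 on C₀,…,C_i, then α restricts to 0 on M_i^+. -/
import Mathlib


/-- abstract equivariant Morse theory: `A` models `H*(M)`, `P i` models
`H*(M_i^+)` (with `H*(M_i^-) ≅ H*(M_{i-1}^+)`), `C i` models `H^{*-λ_i}(C_i)`;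
`resP i : A → P i` is restriction, `ρ i : P i → C i` is restriction to the critical set
`C_i` (so `M_0^+` retracts onto `C_0`, making `ρ 0` injective), `f i : C i → P i` is the
Atiyah–Bott injection whose composite with `ρ i` is multiplication by the Euler class,
hence injective, and the long exact sequences split into short exact sequences
`0 → C_{i+1} → P (i+1) → P i → 0`.  If a class `α` restricts to `0` on `C_0,…,C_i`
then it restricts to `0` on `M_i^+`. -/
theorem stmt_8 {A : Type*} [AddCommGroup A] (k : ℕ)
    (P C : ℕ → Type*) [∀ i, AddCommGroup (P i)] [∀ i, AddCommGroup (C i)]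
    (resP : ∀ i, A →+ P i) (ρ : ∀ i, P i →+ C i)
    (f : ∀ i, C i →+ P i) (g : ∀ i, P (i + 1) →+ P i)
    (hf : ∀ i, Function.Injective (f i))
    (hexact : ∀ i, Function.Exact (f (i + 1)) (g i))
    (hsurj : ∀ i, Function.Surjective (g i))
    (hcompat : ∀ i, (g i).comp (resP (i + 1)) = resP i)
    (hρ0 : Function.Injective (ρ 0))
    (hEuler : ∀ i, Function.Injective ((ρ i).comp (f i)))
    (α : A) (i : ℕ) (hi : i ≤ k)
    (hα : ∀ j, j ≤ i → ρ j (resP j α) = 0) :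
    resP i α = 0 := by
  induction i with
  | zero => exact hρ0 (by simpa using hα 0 le_rfl)
  | succ n ih =>
    have hn : resP n α = 0 :=
      ih (le_trans (Nat.le_succ n) hi) (fun j hj => hα j (le_trans hj (Nat.le_succ n)))
    have hg : g n (resP (n + 1) α) = 0 := by
      have := congrArg (fun h : A →+ P n => h α) (hcompat n)
      simpa [hn] using this
    obtain ⟨c, hc⟩ := ((hexact n) (resP (n + 1) α)).mp hg
    have : ρ (n + 1) (f (n + 1) c) = 0 := by
      rw [hc]; exact hα (n + 1) le_rfl
    have hc0 : c = 0 := hEuler (n + 1) (by simpa using this)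
    rw [← hc, hc0, map_zero]
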